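/- Let n ∈ ℤ_{≥0}^r and 1 ≤ k, l ≤ r with k ≠ l. (a) If n + e_k, n + e_l and n + e_k + e_l are normal, then Φ*_{n+e_k}(z) − Φ*_{n+e_l}(z) = β_{n+e_k+e_l} z (Φ_{n+e_l}(z) − Φ_{n+e_k}(z)). (b) If n, n + e_k and n + e_l are normal, then Φ*_{n+e_k}(z) − Φ*_{n+e_l}(z) = (β_{n+e_k} − β_{n+e_l}) z Φ_n(z), and moreover β_{n+e_k}(Φ*_{n+e_l}(z) − Φ*_n(z)) = β_{n+e_l}(Φ*_{n+e_k}(z) − Φ*_n(z)). -/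

import Mathlib

open MeasureTheory Polynomial

noncomputable section

/-- A system of measures on the unit circle: each `μ j` is a probability measure,
carried by the unit circle `∂𝔻 = {z : |z| = 1}`, with infinite support. -/
def MopucSystem {r : ℕ} (μ : Fin r → Measure ℂ) : Prop :=
  ∀ j, IsProbabilityMeasure (μ j) ∧ μ j ((Metric.sphere (0 : ℂ) 1)ᶜ) = 0 ∧
    ∀ s : Set ℂ, s.Finite → μ j (sᶜ) ≠ 0

/-- The inner product `⟨P, Q⟩_μ = ∫ P(z)·conj (Q(z)) dμ(z)`. -/
def pip (μ : Measure ℂ) (P Q : Polynomial ℂ) : ℂ :=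
  ∫ z, P.eval z * (starRingEnd ℂ) (Q.eval z) ∂μ

/-- `⟨P, z^p⟩_μ`. -/
def mip (μ : Measure ℂ) (P : Polynomial ℂ) (p : ℕ) : ℂ :=
  pip μ P (X ^ p)

/-- The moment `ν^p = ∫ z^p dμ(z)` for `p ∈ ℤ` (on the circle `z^{-m} = conj (z^m)`). -/
def mom (μ : Measure ℂ) (p : ℤ) : ℂ :=
  ∫ z, z ^ p ∂μ

/-- The linear position of the pair `(j, q)` (with `q < n j`): `(∑_{i<j} n i) + q`.
This enumerates the pairs, in lexicographic order, by `0, 1, …, |n| − 1`. -/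
def linIdx {r : ℕ} (n : Fin r → ℕ) (c : (j : Fin r) × Fin (n j)) : ℕ :=
  (∑ i ∈ Finset.univ.filter (fun i => i < c.1), n i) + (c.2 : ℕ)

/-- The moment matrix `M_n`: rows are indexed by pairs `(j, q)` with `1 ≤ j ≤ r`,
`0 ≤ q ≤ n j − 1`, columns by `p = 0, …, |n| − 1` (realized as pairs via the
order-preserving enumeration `linIdx`), and the entry at `((j,q), p)` is `ν_j^{p−q}`. -/
def Mmat {r : ℕ} (μ : Fin r → Measure ℂ) (n : Fin r → ℕ) :
    Matrix ((j : Fin r) × Fin (n j)) ((j : Fin r) × Fin (n j)) ℂ :=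
  Matrix.of fun rq c => mom (μ rq.1) ((linIdx n c : ℤ) - ((rq.2 : ℕ) : ℤ))

/-- The index `n` is normal if `det M_n ≠ 0`.  (For `n = 0` the matrix is empty and its
determinant is `1`, so `n = 0` is normal, matching the convention of the paper.) -/
def NormalIndex {r : ℕ} (μ : Fin r → Measure ℂ) (n : Fin r → ℕ) : Prop :=
  (Mmat μ n).det ≠ 0

/-- A type II multiple orthogonal polynomial for the multi-index `n`. -/
def IsTypeII {r : ℕ} (μ : Fin r → Measure ℂ) (n : Fin r → ℕ) (P : Polynomial ℂ) : Prop :=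
  P ≠ 0 ∧ P.degree ≤ ((∑ j, n j : ℕ) : WithBot ℕ) ∧
    ∀ j, ∀ p : ℕ, p < n j → mip (μ j) P p = 0

/-- A type II* multiple orthogonal polynomial for the multi-index `n`. -/
def IsTypeIIStar {r : ℕ} (μ : Fin r → Measure ℂ) (n : Fin r → ℕ) (P : Polynomial ℂ) : Prop :=
  P ≠ 0 ∧ P.degree ≤ ((∑ j, n j : ℕ) : WithBot ℕ) ∧
    ∀ j, ∀ p : ℕ, 1 ≤ p → p ≤ n j → mip (μ j) P p = 0

/-- A type I multiple orthogonal polynomial for the multi-index `n`: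
a nonzero vector of polynomials with `deg (L j) ≤ n j − 1` (so `L j = 0` when `n j = 0`),
and `∑_j ⟨L j, z^p⟩_j = 0` for `p = 0, …, |n| − 2`. -/
def IsTypeI {r : ℕ} (μ : Fin r → Measure ℂ) (n : Fin r → ℕ) (L : Fin r → Polynomial ℂ) : Prop :=
  L ≠ 0 ∧ (∀ j, (L j).degree < ((n j : ℕ) : WithBot ℕ)) ∧
    ∀ p : ℕ, p + 2 ≤ ∑ j, n j → ∑ j, mip (μ j) (L j) p = 0

/-- A type I* multiple orthogonal polynomial for the multi-index `n`:
a nonzero vector of polynomials with `deg (L j) ≤ n j − 1`,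
and `∑_j ⟨L j, z^p⟩_j = 0` for `p = 1, …, |n| − 1`. -/
def IsTypeIStar {r : ℕ} (μ : Fin r → Measure ℂ) (n : Fin r → ℕ) (L : Fin r → Polynomial ℂ) : Prop :=
  L ≠ 0 ∧ (∀ j, (L j).degree < ((n j : ℕ) : WithBot ℕ)) ∧
    ∀ p : ℕ, 1 ≤ p → p + 1 ≤ ∑ j, n j → ∑ j, mip (μ j) (L j) p = 0

/-- `Φ_n`: the monic type II polynomial of degree exactly `|n|`. -/
def IsPhi {r : ℕ} (μ : Fin r → Measure ℂ) (n : Fin r → ℕ) (P : Polynomial ℂ) : Prop :=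
  IsTypeII μ n P ∧ P.Monic ∧ P.natDegree = ∑ j, n j

/-- `Φ*_n`: the type II* polynomial with `Φ*_n(0) = 1`. -/
def IsPhiStar {r : ℕ} (μ : Fin r → Measure ℂ) (n : Fin r → ℕ) (P : Polynomial ℂ) : Prop :=
  IsTypeIIStar μ n P ∧ P.eval 0 = 1

/-- `Λ_n`: the type I vector normalized by `∑_j ⟨Λ_{n,j}, z^{|n|−1}⟩_j = 1`. -/
def IsLambda {r : ℕ} (μ : Fin r → Measure ℂ) (n : Fin r → ℕ) (L : Fin r → Polynomial ℂ) : Prop :=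
  IsTypeI μ n L ∧ ∑ j, mip (μ j) (L j) ((∑ i, n i) - 1) = 1

/-- `Λ*_n`: the type I* vector normalized by `∑_j ⟨Λ*_{n,j}, 1⟩_j = 1`. -/
def IsLambdaStar {r : ℕ} (μ : Fin r → Measure ℂ) (n : Fin r → ℕ) (L : Fin r → Polynomial ℂ) : Prop :=
  IsTypeIStar μ n L ∧ ∑ j, mip (μ j) (L j) 0 = 1

/-- The multi-index `n + e_k`. -/
def eAdd {r : ℕ} (n : Fin r → ℕ) (k : Fin r) : Fin r → ℕ :=
  Function.update n k (n k + 1)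

/-- The multi-index `n − e_k` (used only when `n k ≥ 1`). -/
def eSub {r : ℕ} (n : Fin r → ℕ) (k : Fin r) : Fin r → ℕ :=
  Function.update n k (n k - 1)

section MomHelpers

lemma circle_ae (μ : Measure ℂ) (h2 : μ ((Metric.sphere (0 : ℂ) 1)ᶜ) = 0) :
    ∀ᵐ z ∂μ, z ∈ Metric.sphere (0 : ℂ) 1 := by
  rw [MeasureTheory.ae_iff]
  exact h2

lemma pow_conj_eq (m p : ℕ) {z : ℂ} (hz : z ∈ Metric.sphere (0 : ℂ) 1) :
    z ^ m * (starRingEnd ℂ) (z ^ p) = z ^ ((m : ℤ) - p) := by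
  have hn : ‖z‖ = 1 := by simpa using hz
  have hz0 : z ≠ 0 := by intro h; rw [h] at hn; simp at hn
  have hns : Complex.normSq z = 1 := by
    rw [Complex.normSq_eq_norm_sq, hn]; norm_num
  have h1 : z * (starRingEnd ℂ) z = 1 := by
    rw [Complex.mul_conj, hns]; norm_num
  have hconj : (starRingEnd ℂ) z = z⁻¹ :=
    eq_inv_of_mul_eq_one_left (by rw [mul_comm]; exact h1)
  rw [map_pow, hconj, ← zpow_natCast z m, ← zpow_natCast z⁻¹ p, inv_zpow, ← zpow_neg,
    ← zpow_add₀ hz0, sub_eq_add_neg]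

lemma integrable_pow_conj (μ : Measure ℂ) (h1 : IsProbabilityMeasure μ)
    (h2 : μ ((Metric.sphere (0 : ℂ) 1)ᶜ) = 0) (m p : ℕ) :
    Integrable (fun z : ℂ => z ^ m * (starRingEnd ℂ) (z ^ p)) μ := by
  haveI := h1
  apply Integrable.mono' (integrable_const (1 : ℝ))
  · exact Continuous.aestronglyMeasurable (by continuity)
  · filter_upwards [circle_ae μ h2] with z hz
    have hn : ‖z‖ = 1 := by simpa using hz
    simp [hn]

lemma integral_pow_conj (μ : Measure ℂ) (h2 : μ ((Metric.sphere (0:ℂ) 1)ᶜ) = 0) (m p : ℕ) :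
    ∫ z, z ^ m * (starRingEnd ℂ) (z ^ p) ∂μ = mom μ ((m : ℤ) - p) := by
  apply integral_congr_ae
  filter_upwards [circle_ae μ h2] with z hz
  exact pow_conj_eq m p hz

lemma mip_eq_sum (μ : Measure ℂ) (h1 : IsProbabilityMeasure μ)
    (h2 : μ ((Metric.sphere (0:ℂ) 1)ᶜ) = 0) (P : Polynomial ℂ) {N : ℕ}
    (hN : P.natDegree < N) (p : ℕ) :
    mip μ P p = ∑ m ∈ Finset.range N, P.coeff m * mom μ ((m : ℤ) - p) := by
  unfold mip pip
  have key : ∀ z : ℂ, P.eval z * (starRingEnd ℂ) ((X ^ p : Polynomial ℂ).eval z)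
      = ∑ m ∈ Finset.range N, P.coeff m * (z ^ m * (starRingEnd ℂ) (z ^ p)) := by
    intro z
    rw [Polynomial.eval_pow, Polynomial.eval_X, Polynomial.eval_eq_sum_range' hN,
      Finset.sum_mul]
    exact Finset.sum_congr rfl fun m _ => (mul_assoc _ _ _)
  simp_rw [key]
  rw [MeasureTheory.integral_finset_sum _
    fun m _ => ((integrable_pow_conj μ h1 h2 m p).const_mul _)]
  refine Finset.sum_congr rfl fun m _ => ?_
  rw [MeasureTheory.integral_const_mul, integral_pow_conj μ h2]

lemma mip_sub (μ : Measure ℂ) (h1 : IsProbabilityMeasure μ)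
    (h2 : μ ((Metric.sphere (0:ℂ) 1)ᶜ) = 0) (P Q : Polynomial ℂ) (p : ℕ) :
    mip μ (P - Q) p = mip μ P p - mip μ Q p := by
  have hP : P.natDegree < max (max P.natDegree Q.natDegree) (P - Q).natDegree + 1 :=
    Nat.lt_succ_of_le ((le_max_left _ _).trans (le_max_left _ _))
  have hQ : Q.natDegree < max (max P.natDegree Q.natDegree) (P - Q).natDegree + 1 :=
    Nat.lt_succ_of_le ((le_max_right _ _).trans (le_max_left _ _))
  have hPQ : (P - Q).natDegree < max (max P.natDegree Q.natDegree) (P - Q).natDegree + 1 :=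
    Nat.lt_succ_of_le (le_max_right _ _)
  rw [mip_eq_sum μ h1 h2 _ hPQ, mip_eq_sum μ h1 h2 _ hP, mip_eq_sum μ h1 h2 _ hQ,
    ← Finset.sum_sub_distrib]
  exact Finset.sum_congr rfl fun m _ => by rw [Polynomial.coeff_sub, sub_mul]

lemma mip_add (μ : Measure ℂ) (h1 : IsProbabilityMeasure μ)
    (h2 : μ ((Metric.sphere (0:ℂ) 1)ᶜ) = 0) (P Q : Polynomial ℂ) (p : ℕ) :
    mip μ (P + Q) p = mip μ P p + mip μ Q p := by
  have hP : P.natDegree < max (max P.natDegree Q.natDegree) (P + Q).natDegree + 1 :=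
    Nat.lt_succ_of_le ((le_max_left _ _).trans (le_max_left _ _))
  have hQ : Q.natDegree < max (max P.natDegree Q.natDegree) (P + Q).natDegree + 1 :=
    Nat.lt_succ_of_le ((le_max_right _ _).trans (le_max_left _ _))
  have hPQ : (P + Q).natDegree < max (max P.natDegree Q.natDegree) (P + Q).natDegree + 1 :=
    Nat.lt_succ_of_le (le_max_right _ _)
  rw [mip_eq_sum μ h1 h2 _ hPQ, mip_eq_sum μ h1 h2 _ hP, mip_eq_sum μ h1 h2 _ hQ,
    ← Finset.sum_add_distrib]
  exact Finset.sum_congr rfl fun m _ => by rw [Polynomial.coeff_add, add_mul]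

lemma mip_C_mul (μ : Measure ℂ) (h1 : IsProbabilityMeasure μ)
    (h2 : μ ((Metric.sphere (0:ℂ) 1)ᶜ) = 0) (a : ℂ) (P : Polynomial ℂ) (p : ℕ) :
    mip μ (C a * P) p = a * mip μ P p := by
  have hP : P.natDegree < P.natDegree + 1 := Nat.lt_succ_self _
  have hCP : (C a * P).natDegree < P.natDegree + 1 :=
    Nat.lt_succ_of_le (Polynomial.natDegree_C_mul_le a P)
  rw [mip_eq_sum μ h1 h2 _ hCP, mip_eq_sum μ h1 h2 _ hP, Finset.mul_sum]
  exact Finset.sum_congr rfl fun m _ => by rw [Polynomial.coeff_C_mul]; ring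

lemma mip_X_mul (μ : Measure ℂ) (h1 : IsProbabilityMeasure μ)
    (h2 : μ ((Metric.sphere (0:ℂ) 1)ᶜ) = 0) (P : Polynomial ℂ) (p : ℕ) (hp : 1 ≤ p) :
    mip μ (X * P) p = mip μ P (p - 1) := by
  have hXP : (X * P).natDegree < P.natDegree + 1 + 1 := by
    have h := Polynomial.natDegree_mul_le (p := (X : Polynomial ℂ)) (q := P)
    have hX : (X : Polynomial ℂ).natDegree = 1 := Polynomial.natDegree_X
    omega
  rw [mip_eq_sum μ h1 h2 _ hXP, mip_eq_sum μ h1 h2 _ (Nat.lt_succ_self P.natDegree),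
    Finset.sum_range_succ']
  have h0 : (X * P).coeff 0 = 0 := by simp [Polynomial.mul_coeff_zero]
  simp only [h0, zero_mul, add_zero, Polynomial.coeff_X_mul]
  refine Finset.sum_congr rfl fun m _ => ?_
  congr 2
  omega

end MomHelpers

section IdxHelpers

lemma linIdx_lt {r : ℕ} (n : Fin r → ℕ) (c : (j : Fin r) × Fin (n j)) :
    linIdx n c < ∑ j, n j := by
  have h1 : (c.2 : ℕ) < n c.1 := c.2.isLt
  have h2 : n c.1 + ∑ i ∈ Finset.univ.filter (fun i => i < c.1), n i
      = ∑ i ∈ insert c.1 (Finset.univ.filter (fun i => i < c.1)), n i := by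
    rw [Finset.sum_insert (by simp)]
  have h3 : ∑ i ∈ insert c.1 (Finset.univ.filter (fun i => i < c.1)), n i ≤ ∑ j, n j :=
    Finset.sum_le_sum_of_subset (Finset.subset_univ _)
  unfold linIdx
  omega

lemma linIdx_mono_aux {r : ℕ} (n : Fin r → ℕ) {j j' : Fin r} (h : j < j') :
    (∑ i ∈ Finset.univ.filter (fun i => i < j), n i) + n j
      ≤ ∑ i ∈ Finset.univ.filter (fun i => i < j'), n i := by
  have hsub : insert j (Finset.univ.filter (fun i => i < j))
      ⊆ Finset.univ.filter (fun i => i < j') := by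
    intro x hx
    simp only [Finset.mem_insert, Finset.mem_filter, Finset.mem_univ, true_and] at hx ⊢
    rcases hx with rfl | hx
    · exact h
    · exact hx.trans h
  have h2 := Finset.sum_le_sum_of_subset (f := n) hsub
  rw [Finset.sum_insert (by simp)] at h2
  omega

lemma linIdx_injective {r : ℕ} (n : Fin r → ℕ) : Function.Injective (linIdx n) := by
  intro c c' h
  obtain ⟨j, q⟩ := c; obtain ⟨j', q'⟩ := c'
  have hq : (q : ℕ) < n j := q.isLt
  have hq' : (q' : ℕ) < n j' := q'.isLt
  unfold linIdx at h
  simp only at h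
  have hjj : j = j' := by
    by_contra hne
    rcases lt_or_gt_of_ne hne with hlt | hlt
    · have := linIdx_mono_aux n hlt
      omega
    · have := linIdx_mono_aux n hlt
      omega
  subst hjj
  have hqq : (q : ℕ) = (q' : ℕ) := by omega
  exact congrArg (Sigma.mk j) (Fin.ext hqq)

lemma linIdx_image {r : ℕ} (n : Fin r → ℕ) :
    Finset.image (linIdx n) Finset.univ = Finset.range (∑ j, n j) := by
  apply Finset.eq_of_subset_of_card_le
  · intro x hx
    simp only [Finset.mem_image] at hx
    obtain ⟨c, _, rfl⟩ := hx
    exact Finset.mem_range.mpr (linIdx_lt n c)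
  · rw [Finset.card_image_of_injective _ (linIdx_injective n), Finset.card_range,
      Finset.card_univ, Fintype.card_sigma]
    simp

lemma sum_range_linIdx {r : ℕ} (n : Fin r → ℕ) (f : ℕ → ℂ) :
    ∑ c : (j : Fin r) × Fin (n j), f (linIdx n c) = ∑ p ∈ Finset.range (∑ j, n j), f p := by
  rw [← linIdx_image n, Finset.sum_image (fun a _ b _ h => linIdx_injective n h)]

end IdxHelpers

section ZeroLemma

lemma typeIIStar_zero {r : ℕ} (μ : Fin r → Measure ℂ) (hμ : MopucSystem μ)
    (m : Fin r → ℕ) (hm : NormalIndex μ m) (R : Polynomial ℂ)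
    (hdeg : R.natDegree ≤ ∑ j, m j) (h0 : R.coeff 0 = 0)
    (horth : ∀ j, ∀ p : ℕ, 1 ≤ p → p ≤ m j → mip (μ j) R p = 0) : R = 0 := by
  classical
  have key : ∀ c : (j : Fin r) × Fin (m j), R.coeff (linIdx m c + 1) = 0 := by
    have hmv : (Mmat μ m).mulVec (fun c => R.coeff (linIdx m c + 1)) = 0 := by
      funext rq
      obtain ⟨j, q⟩ := rq
      have hq : (q : ℕ) < m j := q.isLt
      have h := horth j ((q : ℕ) + 1) (by omega) (by omega)
      rw [mip_eq_sum (μ j) (hμ j).1 (hμ j).2.1 R (N := (∑ j, m j) + 1) (by omega) _] at h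
      rw [Finset.sum_range_succ'] at h
      simp only [h0, zero_mul, add_zero] at h
      have h' : ∑ i ∈ Finset.range (∑ j, m j),
          R.coeff (i + 1) * mom (μ j) ((i : ℤ) - (q : ℕ)) = 0 := by
        rw [← h]
        refine Finset.sum_congr rfl fun i _ => ?_
        congr 2
        push_cast
        ring
      rw [← sum_range_linIdx m (fun i => R.coeff (i + 1) * mom (μ j) ((i : ℤ) - (q : ℕ)))]
        at h'
      simp only [Matrix.mulVec, dotProduct, Mmat, Matrix.of_apply, Pi.zero_apply]
      rw [← h']
      exact Finset.sum_congr rfl fun c _ => mul_comm _ _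
    have hunit : IsUnit (Mmat μ m).det := isUnit_iff_ne_zero.mpr hm
    have h2 := congrArg (fun w => (Mmat μ m)⁻¹.mulVec w) hmv
    simp only [Matrix.mulVec_mulVec, Matrix.nonsing_inv_mul _ hunit, Matrix.one_mulVec,
      Matrix.mulVec_zero] at h2
    intro c
    exact congrFun h2 c
  apply Polynomial.ext
  intro i
  rw [Polynomial.coeff_zero]
  rcases Nat.eq_zero_or_pos i with rfl | hi
  · exact h0
  by_cases hiS : i ≤ ∑ j, m j
  · obtain ⟨c, hc⟩ : ∃ c, linIdx m c = i - 1 := by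
      have hmem : i - 1 ∈ Finset.range (∑ j, m j) := Finset.mem_range.mpr (by omega)
      rw [← linIdx_image m] at hmem
      simpa [Finset.mem_image] using hmem
    have hk := key c
    rw [hc, show i - 1 + 1 = i from by omega] at hk
    exact hk
  · exact Polynomial.coeff_eq_zero_of_natDegree_lt (by omega)

end ZeroLemma

section StepLemma

lemma le_eAdd {r : ℕ} (n : Fin r → ℕ) (t j : Fin r) : n j ≤ eAdd n t j := by
  unfold eAdd
  rcases eq_or_ne j t with rfl | h
  · simp
  · rw [Function.update_of_ne h]

lemma sum_eAdd {r : ℕ} (n : Fin r → ℕ) (t : Fin r) :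
    ∑ j, eAdd n t j = (∑ j, n j) + 1 := by
  unfold eAdd
  rw [Finset.sum_update_of_mem (Finset.mem_univ t)]
  have h2 : ∑ j, n j = n t + ∑ x ∈ Finset.univ \ {t}, n x := by
    rw [Finset.sdiff_singleton_eq_erase, Finset.add_sum_erase _ _ (Finset.mem_univ t)]
  omega

lemma phiStar_step {r : ℕ} (μ : Fin r → Measure ℂ) (hμ : MopucSystem μ)
    (m : Fin r → ℕ) (t : Fin r) (hm : NormalIndex μ m)
    {Φ Φs Φb : Polynomial ℂ} (hΦ : IsPhi μ m Φ) (hΦs : IsPhiStar μ m Φs)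
    (hb : IsPhiStar μ (eAdd m t) Φb) :
    Φs = Φb - C (Φb.coeff (∑ j, eAdd m t j)) * (X * Φ) := by
  have hsum : ∑ j, eAdd m t j = (∑ j, m j) + 1 := sum_eAdd m t
  set S := ∑ j, m j with hS
  set β := Φb.coeff (∑ j, eAdd m t j) with hβ
  have hβ' : β = Φb.coeff (S + 1) := by rw [hβ, hsum]
  have hΦdeg : Φ.natDegree = S := hΦ.2.2
  have hΦmon : Φ.Monic := hΦ.2.1
  have hΦtop : Φ.coeff S = 1 := by rw [← hΦdeg]; exact hΦmon.coeff_natDegree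
  have hΦsdeg : Φs.natDegree ≤ S := Polynomial.natDegree_le_iff_degree_le.mpr hΦs.1.2.1
  have hΦbdeg : Φb.natDegree ≤ S + 1 := by
    have hd := hb.1.2.1
    rw [hsum] at hd
    exact Polynomial.natDegree_le_iff_degree_le.mpr hd
  have hR0 : Φs - Φb + C β * (X * Φ) = 0 := by
    refine typeIIStar_zero μ hμ m hm _ ?_ ?_ ?_
    · refine Polynomial.natDegree_le_iff_coeff_eq_zero.mpr fun i hi => ?_
      have c1 : Φs.coeff i = 0 := Polynomial.coeff_eq_zero_of_natDegree_lt (by omega)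
      have hXΦ : (X * Φ).coeff i = Φ.coeff (i - 1) := by
        obtain ⟨i', rfl⟩ : ∃ i', i = i' + 1 := ⟨i - 1, by omega⟩
        simp [Polynomial.coeff_X_mul]
      rw [Polynomial.coeff_add, Polynomial.coeff_sub, Polynomial.coeff_C_mul, hXΦ, c1]
      by_cases hi2 : i = S + 1
      · rw [hi2, show S + 1 - 1 = S from by omega, hΦtop, ← hβ']
        ring
      · have c2 : Φb.coeff i = 0 := Polynomial.coeff_eq_zero_of_natDegree_lt (by omega)
        have c3 : Φ.coeff (i - 1) = 0 :=
          Polynomial.coeff_eq_zero_of_natDegree_lt (by omega)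
        rw [c2, c3]
        ring
    · have e1 : Φs.coeff 0 = 1 := by
        rw [Polynomial.coeff_zero_eq_eval_zero, hΦs.2]
      have e2 : Φb.coeff 0 = 1 := by
        rw [Polynomial.coeff_zero_eq_eval_zero, hb.2]
      rw [Polynomial.coeff_add, Polynomial.coeff_sub, Polynomial.coeff_C_mul,
        Polynomial.mul_coeff_zero, Polynomial.coeff_X_zero, e1, e2]
      ring
    · intro j p hp1 hp2
      have prob := (hμ j).1
      have hsph := (hμ j).2.1
      rw [mip_add (μ j) prob hsph, mip_sub (μ j) prob hsph, mip_C_mul (μ j) prob hsph,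
        mip_X_mul (μ j) prob hsph _ _ hp1,
        hΦs.1.2.2 j p hp1 hp2, hb.1.2.2 j p hp1 (hp2.trans (le_eAdd m t j)),
        hΦ.1.2.2 j (p - 1) (by omega)]
      ring
  linear_combination hR0

end StepLemma

/-- compatibility relations for the `Φ*`'s (`k ≠ l`):
(a) if `n+e_k`, `n+e_l`, `n+e_k+e_l` are normal then
`Φ*_{n+e_k} − Φ*_{n+e_l} = β_{n+e_k+e_l} z (Φ_{n+e_l} − Φ_{n+e_k})`;
(b) if `n`, `n+e_k`, `n+e_l` are normal then
`Φ*_{n+e_k} − Φ*_{n+e_l} = (β_{n+e_k} − β_{n+e_l}) z Φ_n` and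
`β_{n+e_k}(Φ*_{n+e_l} − Φ*_n) = β_{n+e_l}(Φ*_{n+e_k} − Φ*_n)`. -/
theorem compatibility_typeIIStar (r : ℕ) (hr : 0 < r) (μ : Fin r → Measure ℂ)
    (hμ : MopucSystem μ) (n : Fin r → ℕ) (k l : Fin r) (hkl : k ≠ l) :
    (∀ (Φk Φl Φsk Φsl Φskl : Polynomial ℂ),
      NormalIndex μ (eAdd n k) → NormalIndex μ (eAdd n l) →
      NormalIndex μ (eAdd (eAdd n k) l) →
      IsPhi μ (eAdd n k) Φk → IsPhi μ (eAdd n l) Φl →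
      IsPhiStar μ (eAdd n k) Φsk → IsPhiStar μ (eAdd n l) Φsl →
      IsPhiStar μ (eAdd (eAdd n k) l) Φskl →
      Φsk - Φsl = C (Φskl.coeff (∑ j, eAdd (eAdd n k) l j)) * (X * (Φl - Φk))) ∧
    (∀ (Φ Φs Φsk Φsl : Polynomial ℂ),
      NormalIndex μ n → NormalIndex μ (eAdd n k) → NormalIndex μ (eAdd n l) →
      IsPhi μ n Φ → IsPhiStar μ n Φs →
      IsPhiStar μ (eAdd n k) Φsk → IsPhiStar μ (eAdd n l) Φsl →
      (Φsk - Φsl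
        = C (Φsk.coeff (∑ j, eAdd n k j) - Φsl.coeff (∑ j, eAdd n l j)) * (X * Φ)) ∧
      (C (Φsk.coeff (∑ j, eAdd n k j)) * (Φsl - Φs)
        = C (Φsl.coeff (∑ j, eAdd n l j)) * (Φsk - Φs))) := by
  
  constructor
  · intro Φk Φl Φsk Φsl Φskl hk hl hkl2 hΦk hΦl hΦsk hΦsl hΦskl
    have hcomm : eAdd (eAdd n k) l = eAdd (eAdd n l) k := by
      funext x
      simp only [eAdd, Function.update_apply]
      split_ifs with h1 h2 h3 <;> first | rfl | omega | (exfalso; apply hkl; omega) |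
        (exfalso; apply hkl; rw [← h1, ← h2]) | (exfalso; apply hkl; rw [← h3, ← h1])
    have hΦskl' : IsPhiStar μ (eAdd (eAdd n l) k) Φskl := by rw [← hcomm]; exact hΦskl
    have e1 := phiStar_step μ hμ (eAdd n k) l hk hΦk hΦsk hΦskl
    have e2 := phiStar_step μ hμ (eAdd n l) k hl hΦl hΦsl hΦskl'
    have hsum2 : ∑ j, eAdd (eAdd n l) k j = ∑ j, eAdd (eAdd n k) l j := by rw [hcomm]
    rw [hsum2] at e2
    linear_combination e1 - e2
  · intro Φ Φs Φsk Φsl hn hk hl hΦ hΦs hΦsk hΦsl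
    have e1 := phiStar_step μ hμ n k hn hΦ hΦs hΦsk
    have e2 := phiStar_step μ hμ n l hn hΦ hΦs hΦsl
    constructor
    · rw [map_sub]
      linear_combination e2 - e1
    · linear_combination C (Φsl.coeff (∑ j, eAdd n l j)) * e1
        - C (Φsk.coeff (∑ j, eAdd n k j)) * e2
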